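/- arXiv:1212.2554 — 12 statements merged into one kernel-verified Lean document; each statement's English description precedes it below -/
import Mathlib

section
/- Let G be a finite group and let φ, ψ be endomorphisms of G such that ψ is a quasi-inverse of φ. Then φ + ψ = φψ, i.e. for every x ∈ G one has φ(x)·ψ(x) = ψ(φ(x)). -/
/-- The map `1 - φ : x ↦ x·φ(x)⁻¹` associated to an endomorphism `φ`. -/
def oneSub {G : Type*} [Group G] (φ : G →* G) : G → G := fun x => x * (φ x)⁻¹

/-- `ψ` is a quasi-inverse of `φ` if `1 - ψ` is the two-sided inverse of `1 - φ`
under composition. -/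
def IsQuasiInverse {G : Type*} [Group G] (φ ψ : G →* G) : Prop :=
  Function.LeftInverse (oneSub ψ) (oneSub φ) ∧
    Function.RightInverse (oneSub ψ) (oneSub φ)

/-- If `ψ` is a quasi-inverse of `φ`, then `φ + ψ = φψ`, i.e.
`φ(x)·ψ(x) = ψ(φ(x))` for all `x`. -/
theorem quasiInverse_sum_eq_comp
    {G : Type*} [Group G] [Finite G] (φ ψ : G →* G)
    (h : IsQuasiInverse φ ψ) :
    ∀ x : G, φ x * ψ x = ψ (φ x) := by
  intro x
  have hx := h.1 x
  simp only [oneSub, map_mul, map_inv, mul_inv_rev, inv_inv] at hx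
  -- hx : x * (φ x)⁻¹ * (ψ (φ x) * (ψ x)⁻¹) = x
  have : (φ x)⁻¹ * (ψ (φ x) * (ψ x)⁻¹) = 1 := by
    exact mul_left_cancel (a := x) (by rw [mul_one, ← mul_assoc]; exact hx)
  calc φ x * ψ x = φ x * ((φ x)⁻¹ * (ψ (φ x) * (ψ x)⁻¹)) * ψ x := by rw [this, mul_one]
    _ = ψ (φ x) := by group
end

section
/- Let G be a finite group and φ a fixed-point-free endomorphism of G admitting a quasi-inverse ψ. Then ψ is itself a fixed-point-free endomorphism of G, and ψ is the unique quasi-inverse of φ: if ψ' is any endomorphism of G that is a quasi-inverse of φ, then ψ' = ψ. -/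
/-- If `φ` is a fixed-point-free endomorphism of the finite group `G` with
quasi-inverse `ψ`, then `ψ` is fixed-point-free, and `ψ` is the unique
quasi-inverse of `φ`. -/
theorem quasiInverse_fixedPointFree_and_unique
    {G : Type*} [Group G] [Finite G] (φ ψ : G →* G)
    (hfpf : ∀ x : G, φ x = x → x = 1)
    (h : IsQuasiInverse φ ψ) :
    (∀ x : G, ψ x = x → x = 1) ∧
    (∀ ψ' : G →* G, IsQuasiInverse φ ψ' → ψ' = ψ) := by
  have hinj : Function.Injective (oneSub φ) := by
    intro x y hxy
    have key : φ (y⁻¹ * x) = y⁻¹ * x := by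
      have hxy' : x * (φ x)⁻¹ = y * (φ y)⁻¹ := hxy
      have h2 : y⁻¹ * x * (φ x)⁻¹ = (φ y)⁻¹ := by rw [mul_assoc, hxy']; group
      rw [map_mul, map_inv, ← h2]; group
    have := hfpf _ key
    rw [inv_mul_eq_one] at this
    exact this.symm
  have hbij : Function.Bijective (oneSub φ) := Finite.injective_iff_bijective.mp hinj
  have hψbij : Function.Bijective (oneSub ψ) := by
    refine ⟨fun a b hab => ?_, fun a => ⟨oneSub φ a, h.1 a⟩⟩
    have : oneSub φ (oneSub ψ a) = oneSub φ (oneSub ψ b) := by rw [hab]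
    rwa [h.2 a, h.2 b] at this
  constructor
  · intro x hx
    have h1 : oneSub ψ x = 1 := by simp [oneSub, hx]
    have h2 : oneSub ψ 1 = 1 := by simp [oneSub]
    have := hψbij.1 (h1.trans h2.symm)
    exact this
  · intro ψ' hψ'
    have hfun : oneSub ψ' = oneSub ψ := by
      funext a
      obtain ⟨b, rfl⟩ := hbij.2 a
      rw [hψ'.1 b, h.1 b]
    ext x
    have := congrFun hfun x
    simp only [oneSub] at this
    exact inv_injective (mul_left_cancel this)
end

section
/- Let G be a finite group, and φ, ψ two fixed-point-free endomorphisms of G that are quasi-inverses of each other. Then φ and ψ commute both pointwise and under composition: φ(x)·ψ(x) = ψ(x)·φ(x) for all x ∈ G, and ψ(φ(x)) = φ(ψ(x)) for all x ∈ G. -/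
/-- Two fixed-point-free endomorphisms of a finite group that are quasi-inverses
of each other commute both pointwise and under composition. -/
theorem quasiInverse_commutes
    {G : Type*} [Group G] [Finite G] (φ ψ : G →* G)
    (hφ : ∀ x : G, φ x = x → x = 1)
    (hψ : ∀ x : G, ψ x = x → x = 1)
    (h : IsQuasiInverse φ ψ) :
    (∀ x : G, φ x * ψ x = ψ x * φ x) ∧
    (∀ x : G, ψ (φ x) = φ (ψ x)) := by
  have key1 : ∀ x : G, ψ (φ x) = φ x * ψ x := by
    intro x
    have hx := h.1 x
    simp only [oneSub, map_mul, map_inv] at hx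
    -- hx : x * (φ x)⁻¹ * (ψ x * (ψ (φ x))⁻¹)⁻¹ = x
    calc ψ (φ x) = φ x * x⁻¹ * (x * (φ x)⁻¹ * (ψ x * (ψ (φ x))⁻¹)⁻¹) * ψ x := by group
      _ = φ x * x⁻¹ * x * ψ x := by rw [hx]
      _ = φ x * ψ x := by group
  have key2 : ∀ x : G, φ (ψ x) = ψ x * φ x := by
    intro x
    have hx := h.2 x
    simp only [oneSub, map_mul, map_inv] at hx
    calc φ (ψ x) = ψ x * x⁻¹ * (x * (ψ x)⁻¹ * (φ x * (φ (ψ x))⁻¹)⁻¹) * φ x := by group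
      _ = ψ x * x⁻¹ * x * φ x := by rw [hx]
      _ = ψ x * φ x := by group
  have comm : ∀ x : G, φ x * ψ x = ψ x * φ x := by
    intro x
    have hfix : ψ (ψ x * φ x * (φ x * ψ x)⁻¹) = ψ x * φ x * (φ x * ψ x)⁻¹ := by
      have e1 : ψ (ψ x * φ x) = ψ x * φ x * ψ (ψ x) := by
        rw [← key2 x, key1 (ψ x), key2 x]
      have e2 : ψ (φ x * ψ x) = φ x * ψ x * ψ (ψ x) := by
        rw [map_mul, key1 x, mul_assoc]
      rw [map_mul, map_inv, e1, e2]
      group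
    have := hψ _ hfix
    have := mul_inv_eq_one.mp this
    exact this.symm
  exact ⟨comm, fun x => by rw [key1 x, key2 x, comm x]⟩
end

section
/- Let G be a finite group, and φ, ψ two fixed-point-free endomorphisms of G that are quasi-inverses of each other. Then the images φ(G) and ψ(G) are equal, and φ(G) is an abelian subgroup of G. -/
theorem key_lemma {G : Type*} [Group G] (φ ψ : G →* G)
    (h1 : Function.LeftInverse (oneSub ψ) (oneSub φ)) :
    ∀ x : G, ψ (φ x) = φ x * ψ x := by
  intro x
  have h := h1 x
  simp only [oneSub, map_mul, map_inv] at h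
  have h' : x * ((φ x)⁻¹ * (ψ (φ x) * (ψ x)⁻¹)) = x * 1 := by
    rw [mul_one, ← mul_assoc]
    rw [mul_inv_rev, inv_inv] at h
    exact h
  have h'' := mul_left_cancel h'
  have h3 : ψ (φ x) * (ψ x)⁻¹ = φ x := (inv_mul_eq_one.mp h'').symm
  exact mul_inv_eq_iff_eq_mul.mp h3

/-- Two fixed-point-free endomorphisms of a finite group that are quasi-inverses
of each other have the same image, and this image is an abelian subgroup. -/
theorem quasiInverse_range_eq_and_abelian
    {G : Type*} [Group G] [Finite G] (φ ψ : G →* G)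
    (hφ : ∀ x : G, φ x = x → x = 1)
    (hψ : ∀ x : G, ψ x = x → x = 1)
    (h : IsQuasiInverse φ ψ) :
    φ.range = ψ.range ∧ ∀ a b : G, φ a * φ b = φ b * φ a := by
  obtain ⟨h1, h2⟩ := h
  have key1 : ∀ x : G, ψ (φ x) = φ x * ψ x := key_lemma φ ψ h1
  have key2 : ∀ x : G, φ (ψ x) = ψ x * φ x := key_lemma ψ φ h2
  -- ψ x commutes with φ y
  have comm : ∀ x y : G, ψ x * φ y = φ y * ψ x := by
    intro x y
    have h := key1 (x * y)
    rw [map_mul, map_mul, key1 x, key1 y, map_mul] at h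
    simp only [← mul_assoc] at h
    -- h : φ x * ψ x * φ y * ψ y = φ x * φ y * ψ x * ψ y
    have h'' : ψ x * φ y * ψ y = φ y * ψ x * ψ y := by
      apply mul_left_cancel (a := φ x)
      simp only [← mul_assoc]
      exact h
    exact mul_right_cancel h''
  -- each φ x lies in ψ.range and vice versa
  have mem1 : ∀ x : G, φ x = ψ (φ x * x⁻¹) := by
    intro x
    rw [map_mul, map_inv, key1, mul_assoc, mul_inv_cancel, mul_one]
  have mem2 : ∀ x : G, ψ x = φ (ψ x * x⁻¹) := by
    intro x
    rw [map_mul, map_inv, key2, mul_assoc, mul_inv_cancel, mul_one]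
  constructor
  · ext g
    simp only [MonoidHom.mem_range]
    constructor
    · rintro ⟨x, rfl⟩; exact ⟨φ x * x⁻¹, (mem1 x).symm⟩
    · rintro ⟨x, rfl⟩; exact ⟨ψ x * x⁻¹, (mem2 x).symm⟩
  · intro a b
    rw [mem1 a, comm, ← mem1 a]
end

section
/- Let G be a finite group and φ a fixed-point-free endomorphism of G. Then φ is quasi-invertible if and only if φ is abelian, i.e. the image φ(G) is an abelian subgroup of G. -/
/-- A fixed-point-free endomorphism of a finite group is quasi-invertible
iff it is abelian, i.e. its image is an abelian subgroup. -/
theorem quasiInvertible_iff_abelian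
    {G : Type*} [Group G] [Finite G] (φ : G →* G)
    (hφ : ∀ x : G, φ x = x → x = 1) :
    (∃ ψ : G →* G, IsQuasiInverse φ ψ) ↔
      (∀ a b : G, φ a * φ b = φ b * φ a) := by
  have hinj : Function.Injective (oneSub φ) := by
    intro a b h
    have h' : a * (φ a)⁻¹ = b * (φ b)⁻¹ := h
    have h2 : φ (b⁻¹ * a) = b⁻¹ * a := by
      rw [map_mul, map_inv]
      have := congrArg (fun t => b⁻¹ * t * φ a) h'
      simpa [mul_assoc] using this.symm
    have h3 := hφ _ h2
    exact (inv_mul_eq_one.mp h3).symm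
  constructor
  · rintro ⟨ψ, hL, hR⟩
    have hA : ∀ x : G, ψ (oneSub φ x) = (φ x)⁻¹ := by
      intro x
      have h' : (x * (φ x)⁻¹) * (ψ (x * (φ x)⁻¹))⁻¹ = x := hL x
      have h2 : x * (φ x)⁻¹ = x * ψ (x * (φ x)⁻¹) := mul_inv_eq_iff_eq_mul.mp h'
      exact (mul_left_cancel h2).symm
    have hsurj : ∀ y : G, ∃ x, oneSub φ x = y := fun y => ⟨oneSub ψ y, hR y⟩
    have hcomm : ∀ a b : G, oneSub φ (φ a) * φ b = φ b * oneSub φ (φ a) := by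
      intro a b
      obtain ⟨c, hc⟩ := hsurj (oneSub φ a * oneSub φ b)
      have h1 : ψ (oneSub φ a * oneSub φ b) = (φ a)⁻¹ * (φ b)⁻¹ := by
        rw [map_mul, hA, hA]
      have h2 : ψ (oneSub φ a * oneSub φ b) = (φ c)⁻¹ := by rw [← hc, hA]
      have h3 : φ c = φ b * φ a := by
        have h := h1.symm.trans h2
        rw [← mul_inv_rev] at h
        exact (inv_injective h).symm
      have h4 : c = a * (φ a)⁻¹ * b * φ a := by
        have hc' : c * (φ c)⁻¹ = a * (φ a)⁻¹ * (b * (φ b)⁻¹) := hc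
        rw [h3] at hc'
        have := congrArg (· * (φ b * φ a)) hc'
        simpa [mul_assoc] using this
      have h5 : φ a * (φ (φ a))⁻¹ * (φ b * φ (φ a)) = φ b * φ a := by
        have := congrArg φ h4
        rw [h3] at this
        simpa [map_mul, map_inv, mul_assoc] using this.symm
      show φ a * (φ (φ a))⁻¹ * φ b = φ b * (φ a * (φ (φ a))⁻¹)
      have := congrArg (· * (φ (φ a))⁻¹) h5
      simpa [mul_assoc] using this
    intro a b
    have hmaps : Set.MapsTo (oneSub φ) (Set.range φ) (Set.range φ) := by
      rintro _ ⟨x, rfl⟩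
      exact ⟨x * (φ x)⁻¹, by simp [oneSub, map_mul]⟩
    have hfin : (Set.range (⇑φ)).Finite := Set.finite_range _
    have hbij := (hfin.injOn_iff_bijOn_of_mapsTo hmaps).mp hinj.injOn
    obtain ⟨k, hk, hfk⟩ := hbij.surjOn ⟨a, rfl⟩
    obtain ⟨w, rfl⟩ := hk
    rw [← hfk]
    exact hcomm w b
  · intro hab
    have hC : ∀ a b : G, Commute (φ a) (φ b) := hab
    have hbij : Function.Bijective (oneSub φ) := Finite.injective_iff_bijective.mp hinj
    set e := Equiv.ofBijective _ hbij with he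
    have hes : ∀ y : G, e.symm y * (φ (e.symm y))⁻¹ = y := fun y => e.apply_symm_apply y
    have hmul : ∀ a b : G, (φ (e.symm (a * b)))⁻¹ = (φ (e.symm a))⁻¹ * (φ (e.symm b))⁻¹ := by
      intro a b
      set u := e.symm a with hu
      set v := e.symm b with hv
      have hφz : φ (u * (φ u)⁻¹ * v * φ u) = φ u * φ v := by
        simp only [map_mul, map_inv]
        have h1 : (φ (φ u))⁻¹ * φ v = φ v * (φ (φ u))⁻¹ := ((hC (φ u) v).inv_left).eq
        rw [mul_assoc (φ u), h1, ← mul_assoc, mul_assoc, inv_mul_cancel, mul_one]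
      have hz : e.symm (a * b) = u * (φ u)⁻¹ * v * φ u := by
        rw [Equiv.symm_apply_eq]
        refine Eq.symm ?_
        show (u * (φ u)⁻¹ * v * φ u) * (φ (u * (φ u)⁻¹ * v * φ u))⁻¹ = a * b
        rw [hφz, ← hes a, ← hes b, ← hu, ← hv]
        have h2 : φ u * (φ u * φ v)⁻¹ = (φ v)⁻¹ := by
          rw [mul_inv_rev, ← mul_assoc, (hC u v).inv_right.eq, mul_assoc, mul_inv_cancel,
            mul_one]
        rw [mul_assoc (u * (φ u)⁻¹ * v), h2, mul_assoc, mul_assoc, ← mul_assoc]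
      rw [hz, hφz, mul_inv_rev, (hC u v).inv_inv.eq]
    let ψ : G →* G := MonoidHom.mk' (fun y => (φ (e.symm y))⁻¹) hmul
    refine ⟨ψ, ?_, ?_⟩ <;>
    · have hone : ∀ y : G, oneSub ψ y = e.symm y := by
        intro y
        show y * ((φ (e.symm y))⁻¹)⁻¹ = e.symm y
        rw [inv_inv]
        have := congrArg (· * φ (e.symm y)) (hes y)
        simpa [mul_assoc] using this.symm
      first
      | exact fun x => by rw [hone]; exact e.symm_apply_apply x
      | exact fun y => by rw [hone]; exact e.apply_symm_apply y
end

section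
/- (Fitting's Lemma for finite groups.) Let G be a finite group and φ an endomorphism of G. Then there is a natural number n such that ker(φⁿ) = ker(φⁿ⁺ⁱ) and φⁿ(G) = φⁿ⁺ⁱ(G) for every i ≥ 0, and, setting K = ker(φⁿ) and H = φⁿ(G): (1) K is a normal subgroup of G, H ∩ K = {1}, and G = H·K (so G is the internal semidirect product of K by H); (2) the restriction of φ to K is nilpotent (indeed φⁿ(K) = {1}); (3) φ maps H into H and the restriction of φ to H is an automorphism of H. -/
/-!
The kernels of the powers of `φ` increase and their images decrease, so in the finite lattice of
subgroups both chains are eventually constant, say from `n` on. With `K = ker φⁿ` and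
`H = φⁿ(G)`: an element `φⁿ y` of `H ∩ K` has `y ∈ ker φ²ⁿ = ker φⁿ`, so it is trivial; every
`φⁿ g` lies in `φ²ⁿ(G)`, say `φⁿ g = φⁿ h` with `h ∈ H`, so `g ∈ H K`; and `φ(H) = φⁿ⁺¹(G) = H`,
so `φ` is a surjective, hence bijective, self-map of the finite set `H`.
-/

namespace Monoid.End

variable {G : Type*} [Group G] (φ : Monoid.End G)

theorem pow_add_apply (a b : ℕ) (x : G) : (φ ^ (a + b)) x = (φ ^ a) ((φ ^ b) x) := by
  rw [pow_add, coe_mul, Function.comp_apply]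

theorem pow_apply_comm (n : ℕ) (x : G) : (φ ^ n) (φ x) = φ ((φ ^ n) x) :=
  DFunLike.congr_fun (pow_mul_comm' φ n) x

theorem ker_pow_mono : Monotone fun m : ℕ ↦ (φ ^ m).ker := by
  intro a b hab x hx
  obtain ⟨c, rfl⟩ := Nat.exists_eq_add_of_le hab
  change (φ ^ (a + c)) x = 1
  rw [add_comm, pow_add_apply, show (φ ^ a) x = 1 from hx, map_one]

theorem range_pow_anti : Antitone fun m : ℕ ↦ (φ ^ m).range := by
  rintro a b hab _ ⟨x, rfl⟩
  obtain ⟨c, rfl⟩ := Nat.exists_eq_add_of_le hab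
  exact ⟨(φ ^ c) x, (pow_add_apply φ a c x).symm⟩

theorem exists_ker_pow_eq_and_range_pow_eq [Finite G] :
    ∃ n, ∀ m, n ≤ m → (φ ^ n).ker = (φ ^ m).ker ∧ (φ ^ n).range = (φ ^ m).range := by
  obtain ⟨n, hn⟩ := WellFoundedGT.monotone_chain_condition (α := Subgroup G × (Subgroup G)ᵒᵈ)
    ⟨fun m ↦ ((φ ^ m).ker, OrderDual.toDual (φ ^ m).range),
      fun _ _ hab ↦ Prod.mk_le_mk.mpr ⟨φ.ker_pow_mono hab, φ.range_pow_anti hab⟩⟩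
  exact ⟨n, fun m hm ↦ Prod.ext_iff.mp (hn m hm)⟩

theorem map_mem_ker_pow {n : ℕ} {x : G} (hx : x ∈ (φ ^ n).ker) : φ x ∈ (φ ^ n).ker := by
  change (φ ^ n) (φ x) = 1
  rw [pow_apply_comm, show (φ ^ n) x = 1 from hx, map_one]

theorem map_mem_range_pow {n : ℕ} {x : G} (hx : x ∈ (φ ^ n).range) : φ x ∈ (φ ^ n).range := by
  obtain ⟨y, rfl⟩ := hx
  exact ⟨φ y, pow_apply_comm φ n y⟩

theorem range_pow_inf_ker_pow_eq_bot {n : ℕ} (h : (φ ^ (n + n)).ker ≤ (φ ^ n).ker) :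
    (φ ^ n).range ⊓ (φ ^ n).ker = ⊥ := by
  rw [eq_bot_iff]
  rintro _ ⟨⟨y, rfl⟩, hy⟩
  have hy' : (φ ^ (n + n)) y = 1 := by rwa [pow_add_apply]
  exact Subgroup.mem_bot.mpr (h hy')

theorem exists_mul_mem_range_pow_mem_ker_pow {n : ℕ}
    (h : (φ ^ n).range ≤ (φ ^ (n + n)).range) (g : G) :
    ∃ a ∈ (φ ^ n).range, ∃ b ∈ (φ ^ n).ker, g = a * b := by
  -- the ascription switches `hy` from the `MonoidHom` coercion to the `Monoid.End` one
  obtain ⟨y, hy : (φ ^ (n + n)) y = (φ ^ n) g⟩ := h ⟨g, rfl⟩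
  refine ⟨(φ ^ n) y, ⟨y, rfl⟩, ((φ ^ n) y)⁻¹ * g, ?_, (mul_inv_cancel_left _ _).symm⟩
  change (φ ^ n) (((φ ^ n) y)⁻¹ * g) = 1
  rw [map_mul, map_inv, ← pow_add_apply, hy, inv_mul_cancel]

theorem bijOn_range_pow [Finite G] {n : ℕ} (h : (φ ^ (n + 1)).range = (φ ^ n).range) :
    Set.BijOn φ (φ ^ n).range (φ ^ n).range := by
  refine ((Set.toFinite _).surjOn_iff_bijOn_of_mapsTo fun _ ↦ φ.map_mem_range_pow).mp ?_
  intro _ hx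
  rw [SetLike.mem_coe, ← h] at hx
  obtain ⟨y, rfl⟩ := hx
  exact ⟨(φ ^ n) y, ⟨y, rfl⟩, (Function.iterate_succ_apply' _ n y).symm⟩

end Monoid.End

/-- **Fitting's Lemma for finite groups.** For any endomorphism `φ` of a finite
group `G` there is `n` such that the kernels and images of `φ^(n+i)` stabilize;
setting `K = ker(φ^n)` and `H = im(φ^n)`, `K` is normal, `H ∩ K = 1`, `G = H·K`,
the restriction of `φ` to `K` is nilpotent (indeed `φ^n(K) = 1`), and `φ`
restricts to an automorphism of `H`. -/
theorem fitting_lemma_finite_groups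
    {G : Type*} [Group G] [Finite G] (φ : Monoid.End G) :
    ∃ n : ℕ,
      (∀ i : ℕ, MonoidHom.ker (φ ^ n) = MonoidHom.ker (φ ^ (n + i)) ∧
        MonoidHom.range (φ ^ n) = MonoidHom.range (φ ^ (n + i))) ∧
      (MonoidHom.ker (φ ^ n)).Normal ∧
      (MonoidHom.range (φ ^ n) ⊓ MonoidHom.ker (φ ^ n) = ⊥) ∧
      (∀ g : G, ∃ h ∈ MonoidHom.range (φ ^ n), ∃ k ∈ MonoidHom.ker (φ ^ n),
        g = h * k) ∧
      (∀ x ∈ MonoidHom.ker (φ ^ n), φ x ∈ MonoidHom.ker (φ ^ n)) ∧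
      (∀ x ∈ MonoidHom.ker (φ ^ n), (φ ^ n) x = 1) ∧
      (∀ x ∈ MonoidHom.range (φ ^ n), φ x ∈ MonoidHom.range (φ ^ n)) ∧
      Set.BijOn φ (MonoidHom.range (φ ^ n) : Set G)
        (MonoidHom.range (φ ^ n) : Set G) := by
  obtain ⟨n, hn⟩ := φ.exists_ker_pow_eq_and_range_pow_eq
  have hstable (i : ℕ) := hn (n + i) (Nat.le_add_right n i)
  exact ⟨n, hstable, MonoidHom.normal_ker _,
    φ.range_pow_inf_ker_pow_eq_bot (hstable n).1.ge,
    φ.exists_mul_mem_range_pow_mem_ker_pow (hstable n).2.le,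
    fun _ ↦ φ.map_mem_ker_pow, fun _ hx ↦ hx,
    fun _ ↦ φ.map_mem_range_pow, φ.bijOn_range_pow (hstable 1).2.symm⟩
end

section
/- Let G be a finite group, φ a fixed-point-free endomorphism of G with quasi-inverse ψ, and let n be such that ker(φⁿ) = ker(φⁿ⁺¹) and φⁿ(G) = φⁿ⁺¹(G). Then ψ maps K = ker(φⁿ) into K and H = φⁿ(G) into H. -/
section QuasiInverse

variable {G : Type*} [Group G] {φ ψ : G →* G}

lemma oneSub_mem {S : Subgroup G} (hS : Set.MapsTo φ S S) {x : G} (hx : x ∈ S) :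
    oneSub φ x ∈ S :=
  S.mul_mem hx (S.inv_mem (hS hx))

lemma map_oneSub_of_leftInverse (h : Function.LeftInverse (oneSub ψ) (oneSub φ)) (x : G) :
    ψ (oneSub φ x) = (φ x)⁻¹ := by
  have hx : x * ((φ x)⁻¹ * (ψ (oneSub φ x))⁻¹) = x := by
    simpa only [oneSub, mul_assoc] using h x
  rw [mul_eq_left, inv_mul_eq_one] at hx
  rw [hx, inv_inv]

lemma Set.MapsTo.of_leftInverse_oneSub (h : Function.LeftInverse (oneSub ψ) (oneSub φ))
    {S : Subgroup G} (hfin : (S : Set G).Finite) (hS : Set.MapsTo φ S S) :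
    Set.MapsTo ψ S S := by
  have hsurj : Set.SurjOn (oneSub φ) S S :=
    ((hfin.injOn_iff_bijOn_of_mapsTo fun _ ↦ oneSub_mem hS).mp h.injective.injOn).surjOn
  rintro _ hy
  obtain ⟨x, hx, rfl⟩ := hsurj hy
  rw [map_oneSub_of_leftInverse h]
  exact S.inv_mem (hS hx)

end QuasiInverse

namespace Monoid.End

variable {G : Type*} [Group G] {f g : Monoid.End G}

lemma mapsTo_ker_of_commute (hfg : Commute f g) :
    Set.MapsTo f (MonoidHom.ker g) (MonoidHom.ker g) := by
  intro x (hx : g x = 1)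
  change (g * f) x = 1
  rw [← hfg.eq, coe_mul, Function.comp_apply, hx, map_one]

lemma mapsTo_range_of_commute (hfg : Commute f g) :
    Set.MapsTo f (MonoidHom.range g) (MonoidHom.range g) := by
  rintro _ ⟨y, rfl⟩
  refine ⟨f y, ?_⟩
  change (g * f) y = (f * g) y
  rw [hfg.eq]

end Monoid.End

theorem quasiInverse_preserves_fitting_decomposition_general
    {G : Type*} [Group G] [Finite G] (φ ψ : Monoid.End G)
    (h : IsQuasiInverse φ ψ)
    (n : ℕ) :
    (∀ x ∈ MonoidHom.ker (φ ^ n), ψ x ∈ MonoidHom.ker (φ ^ n)) ∧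
    (∀ x ∈ MonoidHom.range (φ ^ n), ψ x ∈ MonoidHom.range (φ ^ n)) :=
  ⟨Set.MapsTo.of_leftInverse_oneSub h.1 (Set.toFinite _)
      (Monoid.End.mapsTo_ker_of_commute (Commute.self_pow φ n)),
    Set.MapsTo.of_leftInverse_oneSub h.1 (Set.toFinite _)
      (Monoid.End.mapsTo_range_of_commute (Commute.self_pow φ n))⟩

/-- If the fixed-point-free endomorphism `φ` of the finite group `G` has a
quasi-inverse `ψ`, and `n` is an index where the kernels and images of the
powers of `φ` stabilize, then `ψ` maps `K = ker(φ^n)` into itself and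
`H = im(φ^n)` into itself. -/
theorem quasiInverse_preserves_fitting_decomposition
    {G : Type*} [Group G] [Finite G] (φ ψ : Monoid.End G)
    (hφ : ∀ x : G, φ x = x → x = 1)
    (h : IsQuasiInverse φ ψ)
    (n : ℕ)
    (hker : MonoidHom.ker (φ ^ n) = MonoidHom.ker (φ ^ (n + 1)))
    (hrange : MonoidHom.range (φ ^ n) = MonoidHom.range (φ ^ (n + 1))) :
    (∀ x ∈ MonoidHom.ker (φ ^ n), ψ x ∈ MonoidHom.ker (φ ^ n)) ∧
    (∀ x ∈ MonoidHom.range (φ ^ n), ψ x ∈ MonoidHom.range (φ ^ n)) :=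
  quasiInverse_preserves_fitting_decomposition_general φ ψ h n
end

section
/- Let G be a finite abelian group and φ a fixed-point-free endomorphism of G. Then the map 1 - φ : x ↦ x·φ(x)⁻¹ is an automorphism of G, the map ψ : x ↦ ((1 - φ)⁻¹(x))⁻¹ · x is an endomorphism of G, and ψ is a quasi-inverse of φ; in particular every fixed-point-free endomorphism of a finite abelian group is quasi-invertible. -/
/-- If `φ` is a fixed-point-free endomorphism of a finite abelian group `G`,
then `1 - φ` is an automorphism of `G`, the map `x ↦ ((1 - φ)⁻¹(x))⁻¹ · x` is an
endomorphism of `G`, and it is a quasi-inverse of `φ`; in particular `φ` is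
quasi-invertible. -/
theorem fixedPointFree_abelian_quasiInvertible
    {G : Type*} [CommGroup G] [Finite G] (φ : G →* G)
    (hφ : ∀ x : G, φ x = x → x = 1) :
    Function.Bijective (oneSub φ) ∧
    ∃ ψ : G →* G,
      (∀ x : G, ψ x = (Function.invFun (oneSub φ) x)⁻¹ * x) ∧
      IsQuasiInverse φ ψ := by
  have hmul : ∀ x y : G, oneSub φ (x * y) = oneSub φ x * oneSub φ y := by
    intro x y
    simp only [oneSub, map_mul, mul_inv]
    exact mul_mul_mul_comm x y (φ x)⁻¹ (φ y)⁻¹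
  have hinj : Function.Injective (oneSub φ) := by
    intro x y h
    simp only [oneSub] at h
    have hfix : φ (x⁻¹ * y) = x⁻¹ * y := by
      have h' : (φ x)⁻¹ = x⁻¹ * (y * (φ y)⁻¹) := by
        rw [← h]; group
      rw [map_mul, map_inv, ← inv_inv (φ x), h']
      simp [mul_comm, mul_assoc, mul_left_comm]
    have h1 : x⁻¹ * y = 1 := hφ _ hfix
    exact (inv_mul_eq_one.mp h1)
  have hbij : Function.Bijective (oneSub φ) := Finite.injective_iff_bijective.mp hinj
  refine ⟨hbij, ?_⟩
  set inv := Function.invFun (oneSub φ) with hinv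
  have hli : Function.LeftInverse inv (oneSub φ) := Function.leftInverse_invFun hinj
  have hri : Function.RightInverse inv (oneSub φ) := Function.rightInverse_invFun hbij.2
  have hinvmul : ∀ x y : G, inv (x * y) = inv x * inv y := by
    intro x y
    apply hinj
    rw [hri, hmul, hri, hri]
  have hinvone : inv 1 = 1 := by
    apply hinj; rw [hri]; simp [oneSub]
  set ψ : G →* G :=
    { toFun := fun x => (inv x)⁻¹ * x,
      map_one' := by simp [hinvone],
      map_mul' := by
        intro x y
        simp only [hinvmul, mul_inv]
        simp [mul_comm, mul_assoc, mul_left_comm] } with hψ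
  have hos : ∀ y : G, oneSub ψ y = inv y := by
    intro y
    show y * ((inv y)⁻¹ * y)⁻¹ = inv y
    group
  exact ⟨ψ, fun x => rfl, fun x => by rw [hos]; exact hli x,
    fun x => by rw [hos]; exact hri x⟩
end

section
/- Let p be a prime and let G = H₁ × H₂ × ⋯ × Hₙ be a finite abelian p-group, where each Hᵢ is homocyclic of exponent p^{eᵢ} and 0 < e₁ < e₂ < ⋯ < eₙ. Let α be an endomorphism of G; for each i let βᵢ be the restriction to Ω₁(Hᵢ) = {x ∈ Hᵢ : x^p = 1} of the (i,i)-component αᵢᵢ of α (the map Hᵢ → Hᵢ obtained by including Hᵢ into G, applying α, and projecting onto Hᵢ). Then α is fixed-point-free if and only if each βᵢ is a fixed-point-free endomorphism of Ω₁(Hᵢ). -/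
lemma aux_zmod_root (p eN : ℕ) (hp : p.Prime) (he : 0 < eN) (z : ZMod (p ^ eN))
    (hz : p • z = 0) : ∃ w : ZMod (p ^ eN), (p ^ (eN - 1)) • w = z := by
  haveI : NeZero (p ^ eN) := ⟨pow_ne_zero _ hp.ne_zero⟩
  have h1 : ((p * z.val : ℕ) : ZMod (p ^ eN)) = 0 := by
    push_cast
    rw [ZMod.natCast_zmod_val]
    rw [nsmul_eq_mul] at hz
    exact_mod_cast hz
  have h2 : p ^ eN ∣ p * z.val := (ZMod.natCast_eq_zero_iff _ _).mp h1
  have h3 : p ^ (eN - 1) ∣ z.val := by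
    have heq : p ^ eN = p * p ^ (eN - 1) := by
      rw [← pow_succ']
      congr 1
      omega
    have h2' : p * p ^ (eN - 1) ∣ p * z.val := by rw [← heq]; exact h2
    exact (mul_dvd_mul_iff_left (by exact_mod_cast hp.ne_zero : (p:ℕ) ≠ 0)).mp h2'
  obtain ⟨c, hc⟩ := h3
  refine ⟨(c : ZMod (p ^ eN)), ?_⟩
  rw [nsmul_eq_mul]
  have : ((p ^ (eN - 1) * c : ℕ) : ZMod (p ^ eN)) = z := by
    rw [← hc, ZMod.natCast_zmod_val]
  push_cast at this
  exact_mod_cast this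

lemma aux_exp {G : Type*} [CommGroup G] (p eN m : ℕ)
    (φ : G ≃* (Fin m → Multiplicative (ZMod (p ^ eN)))) (z : G) : z ^ (p ^ eN) = 1 := by
  apply φ.injective
  rw [map_pow, map_one]
  funext k
  rw [Pi.pow_apply, Pi.one_apply]
  apply Multiplicative.toAdd.injective
  rw [toAdd_pow]
  show (p ^ eN) • (φ z k).toAdd = Multiplicative.toAdd 1
  rw [nsmul_eq_mul, ZMod.natCast_self]
  simp

lemma aux_root {G : Type*} [CommGroup G] (p eN m : ℕ) (hp : p.Prime) (he : 0 < eN)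
    (φ : G ≃* (Fin m → Multiplicative (ZMod (p ^ eN)))) (x : G) (hx : x ^ p = 1) :
    ∃ y : G, y ^ (p ^ (eN - 1)) = x := by
  have hx' : (φ x) ^ p = 1 := by rw [← map_pow, hx, map_one]
  have hz : ∀ k, p • (φ x k).toAdd = 0 := by
    intro k
    have h := congrFun hx' k
    rw [Pi.pow_apply, Pi.one_apply] at h
    have := congrArg Multiplicative.toAdd h
    rwa [toAdd_pow, toAdd_one] at this
  choose w hw using fun k => aux_zmod_root p eN hp he _ (hz k)
  refine ⟨φ.symm (fun k => Multiplicative.ofAdd (w k)), ?_⟩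
  apply φ.injective
  rw [map_pow, MulEquiv.apply_symm_apply]
  funext k
  rw [Pi.pow_apply]
  apply Multiplicative.toAdd.injective
  rw [toAdd_pow]
  exact hw k

/-- Let `G = H₁ × ⋯ × Hₙ` be a finite abelian `p`-group, with each `Hᵢ`
homocyclic of exponent `p^eᵢ` and `0 < e₁ < ⋯ < eₙ`. An endomorphism `α` of `G`
is fixed-point-free iff for each `i` the restriction to
`Ω₁(Hᵢ) = {x ∈ Hᵢ : x^p = 1}` of the `(i,i)`-component of `α` is a
fixed-point-free endomorphism of `Ω₁(Hᵢ)`. -/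
theorem fixedPointFree_iff_components_fixedPointFree
    (p : ℕ) (hp : p.Prime) (n : ℕ) (e : Fin n → ℕ)
    (he : ∀ i, 0 < e i) (hmono : StrictMono e)
    (H : Fin n → Type*) [∀ i, CommGroup (H i)] [∀ i, Fintype (H i)]
    (hhomo : ∀ i, ∃ m : ℕ, 0 < m ∧
      Nonempty (H i ≃* (Fin m → Multiplicative (ZMod (p ^ e i)))))
    (α : (∀ i, H i) →* (∀ i, H i)) :
    (∀ x : ∀ i, H i, α x = x → x = 1) ↔
      ∀ i : Fin n, ∀ x : H i, x ^ p = 1 →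
        α (Pi.mulSingle i x) i = x → x = 1 := by
  classical
  choose m hm using hhomo
  have φ : ∀ i, H i ≃* (Fin (m i) → Multiplicative (ZMod (p ^ e i))) :=
    fun i => (hm i).2.some
  have hexp : ∀ i (z : H i), z ^ (p ^ e i) = 1 := fun i z => aux_exp p (e i) (m i) (φ i) z
  have hroot : ∀ i (x : H i), x ^ p = 1 → ∃ y, y ^ (p ^ (e i - 1)) = x :=
    fun i x hx => aux_root p (e i) (m i) hp (he i) (φ i) x hx
  have hdecomp : ∀ (x : ∀ i, H i) (j : Fin n), α x j = ∏ i, α (Pi.mulSingle i (x i)) j := by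
    intro x j
    conv_lhs => rw [← Finset.univ_prod_mulSingle x, map_prod]
    simp [Finset.prod_apply]
  have hcomp_socle : ∀ (i j : Fin n) (x : H i), x ^ p = 1 →
      (α (Pi.mulSingle i x) j) ^ p = 1 := by
    intro i j x hx
    have h : (α (Pi.mulSingle i x)) ^ p = 1 := by
      rw [← map_pow, ← Pi.mulSingle_pow, hx, Pi.mulSingle_one, map_one]
    have := congrFun h j
    rwa [Pi.pow_apply, Pi.one_apply] at this
  have htri : ∀ (i j : Fin n), j < i → ∀ x : H i, x ^ p = 1 →
      α (Pi.mulSingle i x) j = 1 := by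
    intro i j hji x hx
    obtain ⟨y, hy⟩ := hroot i x hx
    have hsplit : p ^ (e i - 1) = p ^ (e j) * p ^ (e i - 1 - e j) := by
      rw [← pow_add]
      congr 1
      have h1 := hmono hji
      have h2 := he i
      omega
    calc α (Pi.mulSingle i x) j
        = (α (Pi.mulSingle i y) j) ^ (p ^ (e i - 1)) := by
          rw [← hy, Pi.mulSingle_pow, map_pow, Pi.pow_apply]
      _ = ((α (Pi.mulSingle i y) j) ^ (p ^ (e j))) ^ (p ^ (e i - 1 - e j)) := by
          rw [← pow_mul, ← hsplit]
      _ = 1 := by rw [hexp j, one_pow]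
  constructor
  · -- forward direction
    intro hfpf i x hxp hfix
    by_contra hne
    set bad : Finset (Fin n) := Finset.univ.filter
      (fun i' => ∃ z : H i', z ^ p = 1 ∧ α (Pi.mulSingle i' z) i' = z ∧ z ≠ 1) with hbad
    have hbadne : bad.Nonempty := by
      refine ⟨i, ?_⟩
      rw [hbad, Finset.mem_filter]
      exact ⟨Finset.mem_univ i, x, hxp, hfix, hne⟩
    set i₀ : Fin n := bad.max' hbadne with hi₀
    obtain ⟨x₀, hx₀p, hx₀fix, hx₀ne⟩ :
        ∃ z : H i₀, z ^ p = 1 ∧ α (Pi.mulSingle i₀ z) i₀ = z ∧ z ≠ 1 := by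
      have h : i₀ ∈ bad := by rw [hi₀]; exact bad.max'_mem hbadne
      simp only [hbad, Finset.mem_filter] at h
      exact h.2
    have hβfpf : ∀ j : Fin n, i₀ < j → ∀ d : H j, d ^ p = 1 →
        α (Pi.mulSingle j d) j = d → d = 1 := by
      intro j hj d hd hfd
      by_contra hdne
      have hjmem : j ∈ bad := by
        rw [hbad, Finset.mem_filter]
        exact ⟨Finset.mem_univ j, d, hd, hfd, hdne⟩
      exact absurd (bad.le_max' j hjmem) (not_le.mpr hj)
    have hsurj : ∀ j : Fin n, i₀ < j → ∀ c : H j, c ^ p = 1 →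
        ∃ d : H j, d ^ p = 1 ∧ d / α (Pi.mulSingle j d) j = c := by
      intro j hj c hc
      let f : {d : H j // d ^ p = 1} → {d : H j // d ^ p = 1} :=
        fun d => ⟨d.1 / α (Pi.mulSingle j d.1) j, by
          rw [div_pow, hcomp_socle j j d.1 d.2, d.2, div_one]⟩
      have hinj : Function.Injective f := by
        intro a b hab
        have hab' : a.1 / α (Pi.mulSingle j a.1) j
            = b.1 / α (Pi.mulSingle j b.1) j := congrArg Subtype.val hab
        rw [div_eq_div_iff_mul_eq_mul] at hab'
        have hw : (a.1 / b.1) ^ p = 1 := by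
          rw [div_pow, a.2, b.2, div_one]
        have hwfix : α (Pi.mulSingle j (a.1 / b.1)) j = a.1 / b.1 := by
          have hms : Pi.mulSingle j (a.1 / b.1)
              = Pi.mulSingle j a.1 / Pi.mulSingle j b.1 := by
            rw [div_eq_mul_inv, div_eq_mul_inv, ← Pi.mulSingle_inv, ← Pi.mulSingle_mul]
          rw [hms, map_div, Pi.div_apply, div_eq_div_iff_mul_eq_mul]
          rw [mul_comm (α (Pi.mulSingle j a.1) j) b.1]
          exact hab'.symm
        have h1 : a.1 / b.1 = 1 := hβfpf j hj _ hw hwfix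
        exact Subtype.ext (div_eq_one.mp h1)
      obtain ⟨d, hd⟩ := Finite.surjective_of_injective hinj ⟨c, hc⟩
      exact ⟨d.1, d.2, congrArg Subtype.val hd⟩
    have key : ∀ k : ℕ, ∃ y : ∀ i', H i', y ^ p = 1 ∧ y i₀ = x₀ ∧
        (∀ j' : Fin n, j' < i₀ → y j' = 1) ∧
        ∀ j' : Fin n, (j' : ℕ) < k → α y j' = y j' := by
      intro k
      induction k with
      | zero =>
        refine ⟨Pi.mulSingle i₀ x₀, ?_, Pi.mulSingle_eq_same i₀ x₀, ?_, ?_⟩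
        · rw [← Pi.mulSingle_pow, hx₀p, Pi.mulSingle_one]
        · intro j' hj'
          exact Pi.mulSingle_eq_of_ne (ne_of_lt hj') x₀
        · intro j' hj'
          exact absurd hj' (Nat.not_lt_zero _)
      | succ k ih =>
        obtain ⟨y, hyp, hyi₀, hylt, hyfix⟩ := ih
        by_cases hkn : k < n
        · set j : Fin n := ⟨k, hkn⟩ with hj
          have hjval : (j : ℕ) = k := rfl
          have hyip : ∀ i', (y i') ^ p = 1 := by
            intro i'
            have := congrFun hyp i'
            rwa [Pi.pow_apply, Pi.one_apply] at this
          rcases lt_trichotomy j i₀ with hcase | hcase | hcase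
          · -- j < i₀ : automatically fixed
            refine ⟨y, hyp, hyi₀, hylt, ?_⟩
            intro j' hj'
            by_cases hj'k : (j' : ℕ) < k
            · exact hyfix j' hj'k
            · have hj'eq : j' = j := by
                apply Fin.ext
                omega
              rw [hj'eq]
              rw [hdecomp y j]
              have hall : ∀ i' ∈ Finset.univ, α (Pi.mulSingle i' (y i')) j = 1 := by
                intro i' _
                rcases lt_trichotomy i' j with h | h | h
                · rw [hylt i' (lt_trans h hcase), Pi.mulSingle_one, map_one, Pi.one_apply]
                · rw [h, hylt j hcase, Pi.mulSingle_one, map_one, Pi.one_apply]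
                · exact htri i' j h (y i') (hyip i')
              rw [Finset.prod_eq_one hall, hylt j hcase]
          · -- j = i₀
            refine ⟨y, hyp, hyi₀, hylt, ?_⟩
            intro j' hj'
            by_cases hj'k : (j' : ℕ) < k
            · exact hyfix j' hj'k
            · have hj'eq : j' = j := by
                apply Fin.ext
                omega
              rw [hj'eq, hcase]
              rw [hdecomp y i₀]
              have hps : ∏ i', α (Pi.mulSingle i' (y i')) i₀
                  = α (Pi.mulSingle i₀ (y i₀)) i₀ := by
                refine Finset.prod_eq_single i₀ ?_ ?_
                · intro i' _ hne'
                  rcases lt_or_gt_of_ne hne' with h | h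
                  · rw [hylt i' h, Pi.mulSingle_one, map_one, Pi.one_apply]
                  · exact htri i' i₀ h (y i') (hyip i')
                · intro h
                  exact absurd (Finset.mem_univ i₀) h
              rw [hps, hyi₀, hx₀fix]
          · -- i₀ < j : correct position j
            have hαyp : (α y j) ^ p = 1 := by
              have h : (α y) ^ p = 1 := by rw [← map_pow, hyp, map_one]
              have := congrFun h j
              rwa [Pi.pow_apply, Pi.one_apply] at this
            have hcp : (α y j / y j) ^ p = 1 := by
              rw [div_pow, hαyp, hyip j, div_one]
            obtain ⟨d, hdp, hdeq⟩ := hsurj j hcase _ hcp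
            refine ⟨y * Pi.mulSingle j d, ?_, ?_, ?_, ?_⟩
            · rw [mul_pow, hyp, ← Pi.mulSingle_pow, hdp, Pi.mulSingle_one, mul_one]
            · rw [Pi.mul_apply, Pi.mulSingle_eq_of_ne (ne_of_lt hcase), hyi₀, mul_one]
            · intro j' hj'
              rw [Pi.mul_apply, Pi.mulSingle_eq_of_ne (ne_of_lt (lt_trans hj' hcase)),
                hylt j' hj', mul_one]
            · intro j' hj'
              by_cases hj'k : (j' : ℕ) < k
              · have hj'j : j' ≠ j := by
                  intro hcon
                  rw [hcon, hjval] at hj'k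
                  omega
                rw [map_mul, Pi.mul_apply, Pi.mul_apply, Pi.mulSingle_eq_of_ne hj'j]
                have hj'ltj : j' < j := by
                  rw [Fin.lt_def, hjval]
                  exact hj'k
                rw [htri j j' hj'ltj d hdp, mul_one, mul_one]
                exact hyfix j' hj'k
              · have hj'eq : j' = j := by
                  apply Fin.ext
                  omega
                rw [hj'eq]
                rw [map_mul, Pi.mul_apply, Pi.mul_apply, Pi.mulSingle_eq_same]
                rw [div_eq_div_iff_mul_eq_mul] at hdeq
                -- hdeq : d * y j = α y j * α (Pi.mulSingle j d) j
                rw [← hdeq, mul_comm]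
        · refine ⟨y, hyp, hyi₀, hylt, ?_⟩
          intro j' _
          exact hyfix j' (lt_of_lt_of_le j'.isLt (le_of_not_gt hkn))
    obtain ⟨y, hyp, hyi₀, hylt, hyfix⟩ := key n
    have hfix' : α y = y := funext fun j' => hyfix j' j'.isLt
    have h1 := hfpf y hfix'
    rw [h1] at hyi₀
    exact hx₀ne hyi₀.symm
  · -- backward direction
    intro hβ x hαx
    by_contra hne
    set E := Finset.univ.sup e with hE
    have hGexp : ∀ z : ∀ i, H i, z ^ (p ^ E) = 1 := by
      intro z
      funext i
      have hle : e i ≤ E := Finset.le_sup (Finset.mem_univ i)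
      have hsplit : p ^ E = p ^ (e i) * p ^ (E - e i) := by
        rw [← pow_add]
        congr 1
        omega
      rw [Pi.pow_apply, Pi.one_apply, hsplit, pow_mul, hexp i, one_pow]
    have descent : ∀ (k : ℕ) (z : ∀ i, H i), z ^ (p ^ k) = 1 → α z = z → z ≠ 1 →
        ∃ y : ∀ i, H i, y ≠ 1 ∧ y ^ p = 1 ∧ α y = y := by
      intro k
      induction k with
      | zero =>
        intro z hz _ hzne
        rw [pow_zero, pow_one] at hz
        exact absurd hz hzne
      | succ k ih =>
        intro z hz hαz hzne
        by_cases hzp : z ^ p = 1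
        · exact ⟨z, hzne, hzp, hαz⟩
        · refine ih (z ^ p) ?_ (by rw [map_pow, hαz]) hzp
          rw [← pow_mul, ← pow_succ']
          exact hz
    obtain ⟨y, hyne, hyp, hαy⟩ := descent E x (hGexp x) hαx hne
    have hyip : ∀ i', (y i') ^ p = 1 := by
      intro i'
      have := congrFun hyp i'
      rwa [Pi.pow_apply, Pi.one_apply] at this
    have hs : (Finset.univ.filter (fun j => y j ≠ 1)).Nonempty := by
      by_contra h
      apply hyne
      funext j
      rw [Pi.one_apply]
      by_contra hj
      exact h ⟨j, Finset.mem_filter.mpr ⟨Finset.mem_univ j, hj⟩⟩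
    set j := (Finset.univ.filter (fun j => y j ≠ 1)).min' hs with hjdef
    have hjne : y j ≠ 1 := (Finset.mem_filter.mp (Finset.min'_mem _ hs)).2
    have hjlt : ∀ i', i' < j → y i' = 1 := by
      intro i' hi'
      by_contra hi'ne
      have hle : j ≤ i' :=
        Finset.min'_le _ i' (Finset.mem_filter.mpr ⟨Finset.mem_univ i', hi'ne⟩)
      exact absurd hle (not_le.mpr hi')
    apply hjne
    apply hβ j (y j) (hyip j)
    have h := congrFun hαy j
    rw [hdecomp y j] at h
    have hps : ∏ i', α (Pi.mulSingle i' (y i')) j = α (Pi.mulSingle j (y j)) j := by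
      refine Finset.prod_eq_single j ?_ ?_
      · intro i' _ hne'
        rcases lt_or_gt_of_ne hne' with hlt | hgt
        · rw [hjlt i' hlt, Pi.mulSingle_one, map_one, Pi.one_apply]
        · exact htri i' j hgt (y i') (hyip i')
      · intro hmem
        exact absurd (Finset.mem_univ j) hmem
    rw [hps] at h
    exact h
end

section
/- Let G be a finite group and φ a nilpotent endomorphism of G. Then φ is quasi-invertible if and only if φ is abelian, i.e. the image φ(G) is an abelian subgroup of G. -/
namespace NilpQIAux

variable {G : Type*} [Group G] (φ : Monoid.End G)

/-- `T φ m x = x * φ x * φ² x * ⋯ * φ^{m-1} x`. -/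
def T : ℕ → G → G
  | 0, _ => 1
  | (m+1), x => x * T m (φ x)

lemma T_succ (m : ℕ) (x : G) : T φ (m+1) x = x * T φ m (φ x) := rfl

lemma pow_succ_apply (m : ℕ) (x : G) : (φ ^ (m+1)) x = (φ ^ m) (φ x) := by
  rw [pow_succ]; rfl

lemma T_succ_right (m : ℕ) (x : G) : T φ (m+1) x = T φ m x * (φ ^ m) x := by
  induction m generalizing x with
  | zero => simp [T]
  | succ k ih =>
    rw [T_succ, ih (φ x), T_succ, mul_assoc, pow_succ_apply]

lemma map_T (m : ℕ) (x : G) : φ (T φ m x) = T φ m (φ x) := by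
  induction m generalizing x with
  | zero => simp [T]
  | succ k ih => simp [T_succ, map_mul, ih]

lemma T_oneSub (m : ℕ) (x : G) :
    T φ m (x * (φ x)⁻¹) = x * ((φ ^ m) x)⁻¹ := by
  induction m generalizing x with
  | zero => simp [T]
  | succ k ih =>
    have h : φ (x * (φ x)⁻¹) = φ x * (φ (φ x))⁻¹ := by
      rw [map_mul, map_inv]
    rw [T_succ, h, ih (φ x), pow_succ_apply]
    group

end NilpQIAux

open NilpQIAux in
/-- A nilpotent endomorphism of a finite group is quasi-invertible iff it is
abelian, i.e. its image is an abelian subgroup. -/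
theorem nilpotent_quasiInvertible_iff_abelian
    {G : Type*} [Group G] [Finite G] (φ : Monoid.End G)
    (hnilp : ∃ n : ℕ, 1 ≤ n ∧ ∀ x : G, (φ ^ n) x = 1) :
    (∃ ψ : G →* G, IsQuasiInverse φ ψ) ↔
      (∀ a b : G, φ a * φ b = φ b * φ a) := by
  obtain ⟨n, hn1, hn⟩ := hnilp
  constructor
  · rintro ⟨ψ, hL, hR⟩ a b
    have key : ∀ x : G, ψ (x * (φ x)⁻¹) = (φ x)⁻¹ := by
      intro x
      have h := hL x
      simp only [oneSub] at h
      rw [mul_inv_eq_iff_eq_mul] at h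
      exact (mul_left_cancel h).symm
    have hA : ∀ x : G, ψ x = (φ x)⁻¹ * ψ (φ x) := by
      intro x
      have h := key x
      rw [map_mul, map_inv, mul_inv_eq_iff_eq_mul] at h
      exact h
    have hQ : ∀ u v : G, Commute (φ v) ((φ u)⁻¹ * ψ (φ u)) := by
      intro u v
      have h1 : ψ (u * v) = ψ u * ψ v := map_mul ψ u v
      rw [hA (u * v), hA u, hA v, map_mul, map_mul, mul_inv_rev] at h1
      have h2 : (φ v)⁻¹ * ((φ u)⁻¹ * ψ (φ u)) * ψ (φ v)
          = (φ u)⁻¹ * ψ (φ u) * (φ v)⁻¹ * ψ (φ v) := by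
        simpa [mul_assoc] using h1
      have h3 := mul_right_cancel h2
      have h4 : Commute ((φ v)⁻¹) ((φ u)⁻¹ * ψ (φ u)) := by
        simpa [Commute, SemiconjBy, mul_assoc] using h3
      have h5 := h4.inv_left
      rwa [inv_inv] at h5
    have hfin : ∀ u v : G, Commute (φ v) ((φ u)⁻¹) := by
      intro u v
      have e : (φ u)⁻¹
          = ((φ u)⁻¹ * ψ (φ u)) * ((φ (φ u))⁻¹ * ψ (φ (φ u)))⁻¹ := by
        rw [hA (φ u)]
        group
      rw [e]
      exact (hQ u v).mul_right ((hQ (φ u) v).inv_right)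
    have h := (hfin a b).inv_right
    rw [inv_inv] at h
    exact h.eq.symm
  · intro hab
    obtain ⟨m, rfl⟩ : ∃ m, n = m + 1 := ⟨n - 1, (Nat.succ_pred_eq_of_pos hn1).symm⟩
    have L6 : ∀ k (z w : G), Commute (φ z) (T φ k (φ w)) := by
      intro k
      induction k with
      | zero => intro z w; simp [T]
      | succ j ih =>
        intro z w
        rw [T_succ]
        have hc : Commute (φ z) (φ w) := hab z w
        exact hc.mul_right (ih z (φ w))
    have L6' : ∀ k (z w : G), Commute (T φ k (φ z)) (T φ k (φ w)) := by
      intro k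
      induction k with
      | zero => intro z w; simp [T]
      | succ j ih =>
        intro z w
        rw [T_succ, T_succ]
        have hc : Commute (φ z) (φ w) := hab z w
        exact (hc.mul_right (L6 j z (φ w))).mul_left
          (((L6 j w (φ z)).symm).mul_right (ih (φ z) (φ w)))
    have L7 : ∀ k (x y : G), T φ k (φ x * φ y) = T φ k (φ x) * T φ k (φ y) := by
      intro k
      induction k with
      | zero => intro x y; simp [T]
      | succ j ih =>
        intro x y
        have hφ : φ (φ x * φ y) = φ (φ x) * φ (φ y) := map_mul φ _ _
        rw [T_succ, T_succ, T_succ, hφ, ih (φ x) (φ y)]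
        have hc := (L6 j y (φ x)).eq
        calc φ x * φ y * (T φ j (φ (φ x)) * T φ j (φ (φ y)))
            = φ x * (φ y * T φ j (φ (φ x))) * T φ j (φ (φ y)) := by
              simp [mul_assoc]
          _ = φ x * (T φ j (φ (φ x)) * φ y) * T φ j (φ (φ y)) := by rw [hc]
          _ = φ x * T φ j (φ (φ x)) * (φ y * T φ j (φ (φ y))) := by
              simp [mul_assoc]
    have hmul : ∀ a b : G,
        (T φ m (φ (a * b)))⁻¹ = (T φ m (φ a))⁻¹ * (T φ m (φ b))⁻¹ := by
      intro a b
      rw [map_mul, L7, mul_inv_rev]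
      exact ((L6' m b a).inv_inv).eq
    refine ⟨MonoidHom.mk' (fun x => (T φ m (φ x))⁻¹) hmul, ?_, ?_⟩
    · intro x
      show oneSub _ (oneSub φ x) = x
      have h1 : oneSub (MonoidHom.mk' (fun x => (T φ m (φ x))⁻¹) hmul) (oneSub φ x)
          = T φ (m+1) (x * (φ x)⁻¹) := by
        show (x * (φ x)⁻¹) * ((T φ m (φ (x * (φ x)⁻¹)))⁻¹)⁻¹ = _
        rw [inv_inv, T_succ]
      rw [h1, T_oneSub, hn x, inv_one, mul_one]
    · intro x
      show oneSub φ (oneSub _ x) = x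
      have h1 : oneSub (MonoidHom.mk' (fun x => (T φ m (φ x))⁻¹) hmul) x
          = T φ (m+1) x := by
        show x * ((T φ m (φ x))⁻¹)⁻¹ = _
        rw [inv_inv, T_succ]
      rw [h1]
      show T φ (m+1) x * (φ (T φ (m+1) x))⁻¹ = x
      rw [map_T]
      have h2 : x * T φ (m+1) (φ x) = T φ (m+1) x := by
        rw [← T_succ, T_succ_right, hn x, mul_one]
      have h3 : T φ (m+1) (φ x) = x⁻¹ * T φ (m+1) x := by
        rw [← h2]; group
      rw [h3]
      group
end

section
/- Let m be an odd positive integer and let G be the dihedral group of order 2m. Then every abelian fixed-point-free endomorphism of G is trivial (sends every element to 1). -/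
/-!
A homomorphism with abelian image kills commutators, and `⁅r i, sr 0⁆ = r (2i)`; for odd `m`
doubling is onto `ZMod m`, so `φ` kills every rotation and hence is constant on the reflections.
If that constant value is a reflection it is a fixed point of `φ`; otherwise it is a rotation of
order at most two, which is trivial because `m` is odd.
-/

theorem ZMod.isUnit_two_of_odd {n : ℕ} (hn : Odd n) : IsUnit (2 : ZMod n) := by
  simpa using (ZMod.unitOfCoprime 2 (Nat.coprime_two_left.mpr hn)).isUnit

namespace DihedralGroup

open scoped commutatorElement

variable {n : ℕ} {G : Type*} [Group G]

theorem commutatorElement_r_sr_zero (i : ZMod n) : ⁅(r i : DihedralGroup n), sr 0⁆ = r (i + i) := by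
  simp only [commutatorElement_def, inv_r, inv_sr, r_mul_sr, sr_mul_r, sr_mul_sr]
  ring_nf

theorem map_r_add_self_eq_one (f : DihedralGroup n →* G) (hf : ∀ a b, f a * f b = f b * f a)
    (i : ZMod n) : f (r (i + i)) = 1 := by
  rw [← commutatorElement_r_sr_zero, map_commutatorElement, commutatorElement_eq_one_iff_mul_comm]
  exact hf _ _

theorem map_r_eq_one_of_odd (hn : Odd n) (f : DihedralGroup n →* G)
    (hf : ∀ a b, f a * f b = f b * f a) (j : ZMod n) : f (r j) = 1 := by
  obtain ⟨i, rfl⟩ := Even.of_isUnit_two (ZMod.isUnit_two_of_odd hn) j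
  exact map_r_add_self_eq_one f hf i

theorem map_sr_eq_map_sr_zero_of_odd (hn : Odd n) (f : DihedralGroup n →* G)
    (hf : ∀ a b, f a * f b = f b * f a) (i : ZMod n) : f (sr i) = f (sr 0) := by
  rw [← zero_add i, ← sr_mul_r, map_mul, map_r_eq_one_of_odd hn f hf, mul_one]

theorem r_eq_one_of_mul_self_eq_one (hn : Odd n) {j : ZMod n} (h : r j * r j = 1) : r j = 1 := by
  rw [r_mul_r, one_def, r.injEq, ZMod.add_self_eq_zero_iff_eq_zero hn] at h
  rw [h, r_zero]

end DihedralGroup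

open DihedralGroup

/-- For `m` odd, every abelian fixed-point-free endomorphism of the dihedral
group of order `2m` is trivial. -/
theorem dihedral_odd_abelian_fpf_endomorphism_trivial
    (m : ℕ) (hm : Odd m) (φ : DihedralGroup m →* DihedralGroup m)
    (hab : ∀ a b : DihedralGroup m, φ a * φ b = φ b * φ a)
    (hfpf : ∀ x : DihedralGroup m, φ x = x → x = 1) :
    ∀ x : DihedralGroup m, φ x = 1 := by
  rintro (j | i)
  · exact map_r_eq_one_of_odd hm φ hab j
  rw [map_sr_eq_map_sr_zero_of_odd hm φ hab]
  have hsq : φ (sr 0) * φ (sr 0) = 1 := by rw [← map_mul, sr_mul_self, map_one]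
  rcases h : φ (sr 0) with j | k
  · exact r_eq_one_of_mul_self_eq_one hm (h ▸ hsq)
  · have hfixed : φ (sr k) = sr k := by rw [map_sr_eq_map_sr_zero_of_odd hm φ hab, h]
    exact absurd (hfpf _ hfixed) (by rw [one_def]; rintro ⟨⟩)
end

section
/- Let n ≥ 3 and let φ be a nontrivial abelian fixed-point-free endomorphism of the symmetric group Sₙ. Then φ ∘ φ is the trivial endomorphism, and the image of φ is generated by a single element σ with σ² = 1, σ ≠ 1, and σ an even permutation (σ ∈ Aₙ). -/
/-- A nontrivial abelian fixed-point-free endomorphism `φ` of the symmetric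
group `Sₙ` (`n ≥ 3`) satisfies `φ ∘ φ = 1`, and its image is generated by a
single nontrivial even involution. -/
theorem symmetric_group_abelian_fpf_endomorphism
    (n : ℕ) (hn : 3 ≤ n) (φ : Equiv.Perm (Fin n) →* Equiv.Perm (Fin n))
    (hnontriv : ∃ x : Equiv.Perm (Fin n), φ x ≠ 1)
    (hab : ∀ a b : Equiv.Perm (Fin n), φ a * φ b = φ b * φ a)
    (hfpf : ∀ x : Equiv.Perm (Fin n), φ x = x → x = 1) :
    (∀ x : Equiv.Perm (Fin n), φ (φ x) = 1) ∧
    ∃ σ : Equiv.Perm (Fin n),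
      φ.range = Subgroup.zpowers σ ∧ σ ^ 2 = 1 ∧ σ ≠ 1 ∧
      σ ∈ alternatingGroup (Fin n) := by
  -- φ kills the alternating group
  have halt : ∀ y : Equiv.Perm (Fin n), y ∈ alternatingGroup (Fin n) → φ y = 1 := by
    intro y hy
    rw [← Equiv.Perm.closure_three_cycles_eq_alternating] at hy
    induction hy using Subgroup.closure_induction with
    | mem c hc =>
        -- c is a three cycle; c is conjugate to c⁻¹
        have hconj : IsConj c c⁻¹ := by
          rw [Equiv.Perm.isConj_iff_cycleType_eq, Equiv.Perm.cycleType_inv]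
        obtain ⟨g, hg⟩ := hconj
        have hgeq : (g : Equiv.Perm (Fin n)) * c = c⁻¹ * g := hg
        have h1 : φ c = φ c⁻¹ := by
          have e : φ (g : Equiv.Perm (Fin n)) * φ c = φ c⁻¹ * φ g := by
            rw [← map_mul, ← map_mul, hgeq]
          rw [hab (g : Equiv.Perm (Fin n)) c] at e
          exact mul_right_cancel e
        have h2 : φ c ^ 2 = 1 := by
          rw [sq]; nth_rewrite 1 [h1]; rw [← map_mul, inv_mul_cancel, map_one]
        have h3 : φ c ^ 3 = 1 := by
          rw [← map_pow, show c ^ 3 = 1 from by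
            rw [← hc.orderOf]; exact pow_orderOf_eq_one c, map_one]
        calc φ c = φ c ^ 3 * (φ c ^ 2)⁻¹ := by group
          _ = 1 := by rw [h2, h3]; group
    | one => exact map_one φ
    | mul a b _ _ ha hb => rw [map_mul, ha, hb, one_mul]
    | inv a _ ha => rw [map_inv, ha, inv_one]
  obtain ⟨x, hx⟩ := hnontriv
  set σ := φ x with hσdef
  have hxodd : Equiv.Perm.sign x = -1 := by
    rcases Int.units_eq_one_or (Equiv.Perm.sign x) with h | h
    · exact absurd (halt x (Equiv.Perm.mem_alternatingGroup.mpr h)) hx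
    · exact h
  -- every odd permutation maps to σ
  have hodd : ∀ y : Equiv.Perm (Fin n), Equiv.Perm.sign y = -1 → φ y = σ := by
    intro y h
    have heven : y * x⁻¹ ∈ alternatingGroup (Fin n) := by
      rw [Equiv.Perm.mem_alternatingGroup, map_mul, map_inv, h, hxodd]
      decide
    have h2 := halt _ heven
    rw [map_mul, map_inv] at h2
    have h2 := mul_eq_one_iff_eq_inv.mp h2
    rw [inv_inv] at h2
    exact h2
  -- every value of φ is 1 or σ
  have hval : ∀ y : Equiv.Perm (Fin n), φ y = 1 ∨ φ y = σ := by
    intro y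
    rcases Int.units_eq_one_or (Equiv.Perm.sign y) with h | h
    · exact Or.inl (halt y (Equiv.Perm.mem_alternatingGroup.mpr h))
    · exact Or.inr (hodd y h)
  have hσsq : σ ^ 2 = 1 := by
    rw [hσdef, ← map_pow]
    refine halt _ ?_
    rw [Equiv.Perm.mem_alternatingGroup, map_pow, hxodd]; decide
  have hσeven : σ ∈ alternatingGroup (Fin n) := by
    rcases Int.units_eq_one_or (Equiv.Perm.sign σ) with h | h
    · exact Equiv.Perm.mem_alternatingGroup.mpr h
    · exact absurd (hfpf σ (hodd σ h)) hx
  have hφσ : φ σ = 1 := halt σ hσeven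
  constructor
  · intro y
    rcases hval y with h | h
    · rw [h, map_one]
    · rw [h, hφσ]
  · refine ⟨σ, ?_, hσsq, hx, hσeven⟩
    ext z
    constructor
    · rintro ⟨y, rfl⟩
      rcases hval y with h | h
      · rw [h]; exact one_mem _
      · rw [h]; exact Subgroup.mem_zpowers σ
    · intro hz
      obtain ⟨k, rfl⟩ := Subgroup.mem_zpowers_iff.mp hz
      exact zpow_mem (show σ ∈ φ.range from ⟨x, rfl⟩) k
end
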